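/- arXiv:hep-th/9403004 — 5 statements merged into one kernel-verified Lean document; each statement's English description precedes it below -/
import Mathlib

section
/- If in the setting of Theorem 1 the 'zero curvature' condition [C_i, C_j] + ∂C_i/∂t_j − ∂C_j/∂t_i = 0 holds, then the flows V_{t_i} and V_{t_j} commute: [V_{t_i}, V_{t_j}] K = 0. -/
/-- Work in the algebra `A` of formal
pseudodifferential operators (with coefficients depending on `x` and on times),
with `πm = ( )₋` the projection onto the purely integral part (so `πm a = 0`
characterizes `A₊`, and `A₊` is closed under multiplication).  Let `K` be an
invertible dressing operator, and let `Vi, Vj` be the flows (derivations of the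
coefficients, acting as `∂/∂t_i`, `∂/∂t_j` on the time-dependent operators
`Ci, Cj`) defined by `V_{t_i} K = −(K Cᵢ K⁻¹)₋ K`.  If the
zero curvature condition `[Cᵢ, Cⱼ] + ∂Cᵢ/∂t_j − ∂Cⱼ/∂t_i = 0` holds, then the
flows commute: `[V_{t_i}, V_{t_j}] K = 0`. -/
theorem flows_commute_of_zero_curvature {A : Type*} [Ring A]
    (πm : A →+ A)
    (hidem : ∀ a, πm (πm a) = πm a)
    (hplus_mul : ∀ a b : A, πm a = 0 → πm b = 0 → πm (a * b) = 0)
    (hminus_mul : ∀ a b : A, πm a = a → πm b = b → πm (a * b) = a * b)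
    (Vi Vj : A →+ A)
    (hVi_leib : ∀ a b : A, Vi (a * b) = Vi a * b + a * Vi b)
    (hVj_leib : ∀ a b : A, Vj (a * b) = Vj a * b + a * Vj b)
    (hVi_pi : ∀ a : A, Vi (πm a) = πm (Vi a))
    (hVj_pi : ∀ a : A, Vj (πm a) = πm (Vj a))
    (K Kinv Ci Cj dCi_dtj dCj_dti : A)
    (hK : K * Kinv = 1) (hK' : Kinv * K = 1)
    (hViCj : Vi Cj = dCj_dti)   -- `V_{t_i}` acts on `C_j` as `∂C_j/∂t_i`
    (hVjCi : Vj Ci = dCi_dtj)   -- `V_{t_j}` acts on `C_i` as `∂C_i/∂t_j`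
    (hflow_i : Vi K = -(πm (K * Ci * Kinv)) * K)
    (hflow_j : Vj K = -(πm (K * Cj * Kinv)) * K)
    (hzero_curvature : Ci * Cj - Cj * Ci + dCi_dtj - dCj_dti = 0) :
    Vi (Vj K) = Vj (Vi K) := by
  -- abbreviations (only informal): P = πm (K*Ci*Kinv), Q = πm (K*Cj*Kinv)
  have hV1i : Vi 1 = 0 := by
    have h := hVi_leib 1 1
    simp only [one_mul, mul_one] at h
    exact add_eq_left.mp h.symm
  have hV1j : Vj 1 = 0 := by
    have h := hVj_leib 1 1
    simp only [one_mul, mul_one] at h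
    exact add_eq_left.mp h.symm
  have hViKinv : Vi Kinv = Kinv * πm (K * Ci * Kinv) := by
    have h0 : Vi Kinv * K + Kinv * Vi K = 0 := by
      rw [← hVi_leib, hK', hV1i]
    rw [hflow_i] at h0
    have h1 : Vi Kinv * K = Kinv * πm (K * Ci * Kinv) * K := by
      have h2 : Vi Kinv * K = -(Kinv * (-πm (K * Ci * Kinv) * K)) :=
        eq_neg_of_add_eq_zero_left h0
      rw [h2]; noncomm_ring
    calc Vi Kinv = Vi Kinv * (K * Kinv) := by rw [hK, mul_one]
      _ = Vi Kinv * K * Kinv := by rw [mul_assoc]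
      _ = Kinv * πm (K * Ci * Kinv) * K * Kinv := by rw [h1]
      _ = Kinv * πm (K * Ci * Kinv) * (K * Kinv) := by rw [mul_assoc]
      _ = Kinv * πm (K * Ci * Kinv) := by rw [hK, mul_one]
  have hVjKinv : Vj Kinv = Kinv * πm (K * Cj * Kinv) := by
    have h0 : Vj Kinv * K + Kinv * Vj K = 0 := by
      rw [← hVj_leib, hK', hV1j]
    rw [hflow_j] at h0
    have h1 : Vj Kinv * K = Kinv * πm (K * Cj * Kinv) * K := by
      have h2 : Vj Kinv * K = -(Kinv * (-πm (K * Cj * Kinv) * K)) :=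
        eq_neg_of_add_eq_zero_left h0
      rw [h2]; noncomm_ring
    calc Vj Kinv = Vj Kinv * (K * Kinv) := by rw [hK, mul_one]
      _ = Vj Kinv * K * Kinv := by rw [mul_assoc]
      _ = Kinv * πm (K * Cj * Kinv) * K * Kinv := by rw [h1]
      _ = Kinv * πm (K * Cj * Kinv) * (K * Kinv) := by rw [mul_assoc]
      _ = Kinv * πm (K * Cj * Kinv) := by rw [hK, mul_one]
  -- derivative of the conjugated operators
  have hViMj : Vi (K * Cj * Kinv)
      = -(πm (K * Ci * Kinv) * (K * Cj * Kinv)) + K * dCj_dti * Kinv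
        + (K * Cj * Kinv) * πm (K * Ci * Kinv) := by
    rw [hVi_leib (K * Cj) Kinv, hVi_leib K Cj, hViCj, hflow_i, hViKinv]
    noncomm_ring
  have hVjMi : Vj (K * Ci * Kinv)
      = -(πm (K * Cj * Kinv) * (K * Ci * Kinv)) + K * dCi_dtj * Kinv
        + (K * Ci * Kinv) * πm (K * Cj * Kinv) := by
    rw [hVj_leib (K * Ci) Kinv, hVj_leib K Ci, hVjCi, hflow_j, hVjKinv]
    noncomm_ring
  -- expand both sides
  have e1 : Vi (Vj K)
      = -(πm (Vi (K * Cj * Kinv)) * K)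
        + πm (K * Cj * Kinv) * (πm (K * Ci * Kinv) * K) := by
    rw [hflow_j]
    have : -πm (K * Cj * Kinv) * K = -(πm (K * Cj * Kinv) * K) := by noncomm_ring
    rw [this, map_neg, hVi_leib, hVi_pi, hflow_i]
    noncomm_ring
  have e2 : Vj (Vi K)
      = -(πm (Vj (K * Ci * Kinv)) * K)
        + πm (K * Ci * Kinv) * (πm (K * Cj * Kinv) * K) := by
    rw [hflow_i]
    have : -πm (K * Ci * Kinv) * K = -(πm (K * Ci * Kinv) * K) := by noncomm_ring
    rw [this, map_neg, hVj_leib, hVj_pi, hflow_j]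
    noncomm_ring
  -- zero curvature in conjugated form
  have hconj : K * (Cj * Ci) * Kinv = (K * Cj * Kinv) * (K * Ci * Kinv) := by
    have : (K * Cj * Kinv) * (K * Ci * Kinv) = K * Cj * (Kinv * K) * (Ci * Kinv) := by
      noncomm_ring
    rw [this, hK']; noncomm_ring
  have hconj' : K * (Ci * Cj) * Kinv = (K * Ci * Kinv) * (K * Cj * Kinv) := by
    have : (K * Ci * Kinv) * (K * Cj * Kinv) = K * Ci * (Kinv * K) * (Cj * Kinv) := by
      noncomm_ring
    rw [this, hK']; noncomm_ring
  have hcurv : K * dCi_dtj * Kinv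
      = K * dCj_dti * Kinv
        + ((K * Cj * Kinv) * (K * Ci * Kinv) - (K * Ci * Kinv) * (K * Cj * Kinv)) := by
    have hd : dCi_dtj = dCj_dti + (Cj * Ci - Ci * Cj) := by
      have h := hzero_curvature
      have : dCi_dtj - (dCj_dti + (Cj * Ci - Ci * Cj)) = 0 := by
        calc dCi_dtj - (dCj_dti + (Cj * Ci - Ci * Cj))
            = Ci * Cj - Cj * Ci + dCi_dtj - dCj_dti := by abel
          _ = 0 := h
      exact sub_eq_zero.mp this
    rw [← hconj, ← hconj', hd]
    noncomm_ring
  -- the key πm computation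
  have hXdiff :
      (-(πm (K * Cj * Kinv) * (K * Ci * Kinv)) + K * dCi_dtj * Kinv
        + (K * Ci * Kinv) * πm (K * Cj * Kinv))
      - (-(πm (K * Ci * Kinv) * (K * Cj * Kinv)) + K * dCj_dti * Kinv
        + (K * Cj * Kinv) * πm (K * Ci * Kinv))
      = πm (K * Ci * Kinv) * πm (K * Cj * Kinv)
        - πm (K * Cj * Kinv) * πm (K * Ci * Kinv)
        + ((K * Cj * Kinv - πm (K * Cj * Kinv)) * (K * Ci * Kinv - πm (K * Ci * Kinv))
          - (K * Ci * Kinv - πm (K * Ci * Kinv)) * (K * Cj * Kinv - πm (K * Cj * Kinv))) := by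
    rw [hcurv]; noncomm_ring
  have hRi : πm (K * Ci * Kinv - πm (K * Ci * Kinv)) = 0 := by
    rw [map_sub, hidem, sub_self]
  have hRj : πm (K * Cj * Kinv - πm (K * Cj * Kinv)) = 0 := by
    rw [map_sub, hidem, sub_self]
  have hkey : πm (Vj (K * Ci * Kinv)) - πm (Vi (K * Cj * Kinv))
      = πm (K * Ci * Kinv) * πm (K * Cj * Kinv)
        - πm (K * Cj * Kinv) * πm (K * Ci * Kinv) := by
    rw [hVjMi, hViMj, ← map_sub, hXdiff, map_add, map_sub, map_sub,
      hminus_mul _ _ (hidem _) (hidem _), hminus_mul _ _ (hidem _) (hidem _),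
      hplus_mul _ _ hRj hRi, hplus_mul _ _ hRi hRj, sub_zero, add_zero]
  -- finish
  rw [e1, e2]
  have hfin : πm (Vj (K * Ci * Kinv))
      = πm (Vi (K * Cj * Kinv))
        + (πm (K * Ci * Kinv) * πm (K * Cj * Kinv)
          - πm (K * Cj * Kinv) * πm (K * Ci * Kinv)) := by
    rw [← hkey]; noncomm_ring
  rw [hfin]
  noncomm_ring
end

section
/- The KP hierarchy flows ∂K/∂t_n = −(K ∂^n K^{−1})₋ K pairwise commute: for all positive integers n, m, one has [∂_{t_n}, ∂_{t_m}] K = 0, where the action on K is given by the hierarchy equations. -/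
/-- The KP hierarchy flows `∂K/∂t_n = −(K ∂ⁿ K⁻¹)₋ K`
pairwise commute: `[∂_{t_n}, ∂_{t_m}] K = 0` for all `n, m ≥ 1`.
Here `A` is the algebra of formal pseudodifferential operators with
coefficients depending on the times, `πm = ( )₋` the projection onto the purely
integral part, `Dd` the operator `∂` (time-independent, so `V n Dd = 0`),
`K = 1 + Σ_{j≥1} K_j ∂^{-j}` an invertible dressing operator, and the flows
`V n` are derivations acting on `K` by the hierarchy equations. -/
theorem kp_flows_commute {A : Type*} [Ring A]
    (πm : A →+ A)
    (hidem : ∀ a, πm (πm a) = πm a)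
    (hplus_mul : ∀ a b : A, πm a = 0 → πm b = 0 → πm (a * b) = 0)
    (hminus_mul : ∀ a b : A, πm a = a → πm b = b → πm (a * b) = a * b)
    (V : ℕ → A →+ A)
    (hV_leib : ∀ n, ∀ a b : A, V n (a * b) = V n a * b + a * V n b)
    (hV_pi : ∀ n, ∀ a : A, V n (πm a) = πm (V n a))
    (K Kinv Dd : A)
    (hK : K * Kinv = 1) (hK' : Kinv * K = 1)
    (hVD : ∀ n, V n Dd = 0)   -- `∂` is time-independent
    (hflow : ∀ n, 1 ≤ n → V n K = -(πm (K * Dd ^ n * Kinv)) * K) :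
    ∀ n m, 1 ≤ n → 1 ≤ m → V n (V m K) = V m (V n K) := by
  intro n m hn hm
  -- notation
  set P : ℕ → A := fun j => K * Dd ^ j * Kinv with hPdef
  set L : ℕ → A := fun j => πm (P j) with hLdef
  have hflow' : ∀ j, 1 ≤ j → V j K = -(L j) * K := fun j hj => hflow j hj
  -- V kills 1
  have hV1 : ∀ k, V k (1 : A) = 0 := by
    intro k
    have h : V k (1 : A) = V k 1 + V k 1 := by
      have := hV_leib k 1 1; simpa using this
    exact (add_eq_left.mp h.symm)
  -- V kills powers of Dd
  have hVpow : ∀ k j, V k (Dd ^ j) = 0 := by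
    intro k j
    induction j with
    | zero => simpa using hV1 k
    | succ j ih =>
      rw [pow_succ, hV_leib, ih, hVD]
      simp
  -- derivative of Kinv
  have hVinv : ∀ j, 1 ≤ j → V j Kinv = Kinv * L j := by
    intro j hj
    have h0 : V j (K * Kinv) = 0 := by rw [hK]; exact hV1 j
    rw [hV_leib, hflow' j hj] at h0
    have h1 : K * V j Kinv = L j := by
      have : -(L j) * K * Kinv = -(L j) := by rw [mul_assoc, hK, mul_one]
      rw [this] at h0
      exact (neg_add_eq_zero.mp h0).symm
    calc V j Kinv = (Kinv * K) * V j Kinv := by rw [hK', one_mul]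
      _ = Kinv * (K * V j Kinv) := by rw [mul_assoc]
      _ = Kinv * L j := by rw [h1]
  -- derivative of P k
  have hVP : ∀ j k, 1 ≤ j → V j (P k) = P k * L j - L j * P k := by
    intro j k hj
    show V j (K * Dd ^ k * Kinv) = (K * Dd ^ k * Kinv) * L j - L j * (K * Dd ^ k * Kinv)
    rw [hV_leib, hV_leib, hVpow, hVinv j hj, hflow' j hj]
    noncomm_ring
  -- products of P's commute
  have hPP : P n * P m = P m * P n := by
    have key : ∀ j k : ℕ, P j * P k = K * Dd ^ (j + k) * Kinv := by
      intro j k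
      show (K * Dd ^ j * Kinv) * (K * Dd ^ k * Kinv) = K * Dd ^ (j + k) * Kinv
      have e : Kinv * (K * (Dd ^ k * Kinv)) = Dd ^ k * Kinv := by
        rw [← mul_assoc, hK', one_mul]
      calc (K * Dd ^ j * Kinv) * (K * Dd ^ k * Kinv)
          = K * (Dd ^ j * (Kinv * (K * (Dd ^ k * Kinv)))) := by noncomm_ring
        _ = K * (Dd ^ j * (Dd ^ k * Kinv)) := by rw [e]
        _ = K * Dd ^ (j + k) * Kinv := by rw [pow_add]; noncomm_ring
    rw [key n m, key m n, Nat.add_comm]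
  -- projection facts
  have hπL : ∀ j, πm (L j) = L j := fun j => hidem (P j)
  have hLL : ∀ j k, πm (L j * L k) = L j * L k :=
    fun j k => hminus_mul _ _ (hπL j) (hπL k)
  have hB : ∀ j, πm (P j - L j) = 0 := by
    intro j
    rw [map_sub, hπL]
    simp [hLdef]
  have hBB : ∀ j k, πm ((P j - L j) * (P k - L k)) = 0 :=
    fun j k => hplus_mul _ _ (hB j) (hB k)
  -- the key zero-curvature identity
  have hkey : πm (P n * L m - L m * P n) - πm (P m * L n - L n * P m)
      = L n * L m - L m * L n := by
    rw [← map_sub]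
    have expand : (P n * L m - L m * P n) - (P m * L n - L n * P m)
        = (P n * P m - P m * P n)
          - ((P n - L n) * (P m - L m) - (P m - L m) * (P n - L n))
          + (L n * L m - L m * L n) := by noncomm_ring
    rw [expand, hPP, sub_self, zero_sub, map_add, map_neg, map_sub, hBB, hBB,
      map_sub, hLL, hLL]
    abel
  -- compute the second derivatives
  have step : ∀ a b : ℕ, 1 ≤ a → 1 ≤ b →
      V a (V b K) = -πm (P b * L a - L a * P b) * K + L b * (L a * K) := by
    intro a b ha hb
    rw [hflow' b hb, hV_leib, map_neg, hV_pi, hVP a b ha, hflow' a ha]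
    noncomm_ring
  rw [step n m hn hm, step m n hm hn]
  have h1 : πm (P m * L n - L n * P m)
      = πm (P n * L m - L m * P n) - (L n * L m - L m * L n) := by
    rw [← hkey]; abel
  rw [h1]
  noncomm_ring
end

section
/- For formal pseudodifferential operators P = Σ_k p_k ∂^k and Q = Σ_k q_k ∂^{−k}, the residue identity res_λ (P e^{λx})(Q e^{−λx}) = res_∂ (P Q*) holds, where both sides equal Σ_{n+m=1} (−1)^m p_n q_m. -/
/-!  **Statement 8 (Dickey's lemma).**
For `P = Σ_{k≥0} p_k ∂^k` (finitely many terms) and `Q = Σ_{k≥0} q_k ∂^{-k}`,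
with coefficients formal power series in `x`:
`res_λ (P e^{λx})(Q e^{-λx}) = res_∂ (P Q*)`, both sides being equal to
`Σ_{pairs} (-1)^m p_n q_m` over the pairs with `m = n + 1` (i.e. the exponent
of `λ`, resp. of `∂`, equal to `-1`). -/

noncomputable section

/-- derivative `d/dx` on coefficients. -/
def Dx : PowerSeries ℝ → PowerSeries ℝ := fun f => PowerSeries.derivative ℝ f

/-- Generalized binomial coefficient `C(i, k)`, `i ∈ ℤ`. -/
def zchoose (i : ℤ) (k : ℕ) : ℝ :=
  (∏ j ∈ Finset.range k, ((i : ℝ) - j)) / (Nat.factorial k : ℝ)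

/-- The coefficient of `λ^e` in `(P e^{λx})(Q e^{-λx})
= (Σ_n p_n λ^n)(Σ_m q_m (-λ)^{-m})`, using `∂^n e^{λx} = λ^n e^{λx}` for all
`n ∈ ℤ`.  Here `Np` is a bound for the order of `P`. -/
def lambdaCoeff (p q : ℕ → PowerSeries ℝ) (Np : ℕ) (e : ℤ) : PowerSeries ℝ :=
  ∑ n ∈ Finset.range (Np + 1),
    if 0 ≤ (n : ℤ) - e then
      ((-1 : ℝ) ^ ((n : ℤ) - e).toNat) • (p n * q (((n : ℤ) - e).toNat))
    else 0

/-- `res_∂ (P Q*)`: the coefficient of `∂^{-1}` in `P Q*`, where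
`Q* = Σ_m (-1)^m ∂^{-m} q_m` and
`∂^{n-m} ∘ q_m = Σ_k C(n-m, k) q_m^{(k)} ∂^{n-m-k}`; the residue picks out
`k = n - m + 1 ≥ 0`. -/
def resPQstar (p q : ℕ → PowerSeries ℝ) (Np : ℕ) : PowerSeries ℝ :=
  ∑ n ∈ Finset.range (Np + 1), ∑ m ∈ Finset.range (n + 2),
    ((-1 : ℝ) ^ m * zchoose ((n : ℤ) - m) (((n : ℤ) - m + 1).toNat)) •
      (p n * Dx^[((n : ℤ) - m + 1).toNat] (q m))

/-- `res_λ (P e^{λx})(Q e^{-λx}) = res_∂ (P Q*)`, and both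
sides equal `Σ (-1)^m p_n q_m` over the pairs `(n, m)` with `m = n + 1`. -/
theorem dickey_lemma (p q : ℕ → PowerSeries ℝ) (Np : ℕ)
    (hp : ∀ k, Np < k → p k = 0) :
    lambdaCoeff p q Np (-1) = resPQstar p q Np ∧
    lambdaCoeff p q Np (-1) =
      ∑ n ∈ Finset.range (Np + 1), ((-1 : ℝ) ^ (n + 1)) • (p n * q (n + 1)) := by
  have hzc : ∀ n m : ℕ, m ≤ n → zchoose ((n : ℤ) - m) (((n : ℤ) - m + 1).toNat) = 0 := by
    intro n m hmn
    have hk : ((n : ℤ) - m + 1).toNat = (n - m) + 1 := by omega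
    rw [hk]
    unfold zchoose
    rw [Finset.prod_eq_zero (Finset.self_mem_range_succ (n - m))
      (by push_cast [Nat.cast_sub hmn]; ring), zero_div]
  have hL : lambdaCoeff p q Np (-1) =
      ∑ n ∈ Finset.range (Np + 1), ((-1 : ℝ) ^ (n + 1)) • (p n * q (n + 1)) := by
    unfold lambdaCoeff
    apply Finset.sum_congr rfl
    intro n _
    have h1 : (0 : ℤ) ≤ (n : ℤ) - (-1) := by omega
    have h2 : ((n : ℤ) - (-1)).toNat = n + 1 := by omega
    rw [if_pos h1, h2]
  refine ⟨?_, hL⟩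
  rw [hL]
  unfold resPQstar
  apply Finset.sum_congr rfl
  intro n _
  rw [Finset.sum_eq_single (n + 1)]
  · have h2 : ((n : ℤ) - ((n + 1 : ℕ) : ℤ) + 1).toNat = 0 := by push_cast; omega
    rw [h2]
    simp [zchoose]
  · intro m hm hne
    have hmn : m ≤ n := by
      simp only [Finset.mem_range] at hm; omega
    rw [hzc n m hmn]
    simp
  · intro h
    exact absurd (Finset.self_mem_range_succ _) h

end
end

section
/- The vector fields T(f) = f ∂_t + (2/3) y f′ ∂_y + (1/3)(x f′ + (2/3) y² f″) ∂_x − ((1/3) w f′ + (1/9) x² f″ + (4/27) x y² f‴ + (4/243) y⁴ f⁗) ∂_w on ℝ⁴ with coordinates (x, y, t, w), parametrized by smooth functions f(t), form a Lie algebra under the vector-field commutator with relations [T(f₁), T(f₂)] = T(f₁ f₂′ − f₁′ f₂), i.e. a centerless Virasoro (Witt-type) algebra. -/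
/-!  Vector fields on `ℝ⁴` with coordinates `(x, y, t, w) = (p 0, p 1, p 2, p 3)`,
encoded by their coefficient functions `V : (Fin 4 → ℝ) → (Fin 4 → ℝ)`; the Lie
bracket of vector fields is `[V, W](p) = (DW)_p (V p) − (DV)_p (W p)`. -/

noncomputable section

abbrev E4 := Fin 4 → ℝ

/-- Commutator (Lie bracket) of vector fields. -/
def vbracket (V W : E4 → E4) : E4 → E4 :=
  fun p => fderiv ℝ W p (V p) - fderiv ℝ V p (W p)

/-- `T(f) = f∂_t + (2/3)yf′∂_y + (1/3)(xf′ + (2/3)y²f″)∂_x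
− ((1/3)wf′ + (1/9)x²f″ + (4/27)xy²f‴ + (4/243)y⁴f⁗)∂_w`. -/
def Tvf (f : ℝ → ℝ) : E4 → E4 := fun p =>
  ![(1/3) * (p 0 * deriv f (p 2) + (2/3) * (p 1)^2 * deriv (deriv f) (p 2)),
    (2/3) * p 1 * deriv f (p 2),
    f (p 2),
    -((1/3) * p 3 * deriv f (p 2) + (1/9) * (p 0)^2 * deriv (deriv f) (p 2)
      + (4/27) * p 0 * (p 1)^2 * deriv (deriv (deriv f)) (p 2)
      + (4/243) * (p 1)^4 * deriv (deriv (deriv (deriv f))) (p 2))]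

/-- `Y(g) = g∂_y + (2/3)yg′∂_x − (4/9)y(xg″ + (2/9)y²g‴)∂_w`. -/
def Yvf (g : ℝ → ℝ) : E4 → E4 := fun p =>
  ![(2/3) * p 1 * deriv g (p 2),
    g (p 2),
    0,
    -(4/9) * p 1 * (p 0 * deriv (deriv g) (p 2)
      + (2/9) * (p 1)^2 * deriv (deriv (deriv g)) (p 2))]

/-- `X(h) = h∂_x − (2/3)(xh′ + (2/3)y²h″)∂_w`. -/
def Xvf (h : ℝ → ℝ) : E4 → E4 := fun p =>
  ![h (p 2),
    0,
    0,
    -(2/3) * (p 0 * deriv h (p 2) + (2/3) * (p 1)^2 * deriv (deriv h) (p 2))]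

/-- `W(k) = ky∂_w`. -/
def Wvf (k : ℝ → ℝ) : E4 → E4 := fun p => ![0, 0, 0, k (p 2) * p 1]

/-- `U(ℓ) = ℓ∂_w`. -/
def Uvf (l : ℝ → ℝ) : E4 → E4 := fun p => ![0, 0, 0, l (p 2)]

end

noncomputable abbrev pr4 (i : Fin 4) : E4 →L[ℝ] ℝ := ContinuousLinearMap.proj i

lemma hfd_sq {a : E4 → ℝ} {a' : E4 →L[ℝ] ℝ} {x : E4} (h : HasFDerivAt a a' x) :
    HasFDerivAt (fun y => a y ^ 2) ((2 * a x) • a') x := by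
  have e : (fun y => a y ^ 2) = a * a := by funext y; simp [pow_two]
  rw [e]; exact (h.mul h).congr_fderiv (by rw [two_mul, add_smul])

lemma hfd_pow4 {a : E4 → ℝ} {a' : E4 →L[ℝ] ℝ} {x : E4} (h : HasFDerivAt a a' x) :
    HasFDerivAt (fun y => a y ^ 4) ((4 * a x ^ 3) • a') x := by
  have h2 := hfd_sq (hfd_sq h)
  have e1 : (fun y => (a y ^ 2) ^ 2) = fun y => a y ^ 4 := by funext y; ring
  have e2 : (2 * a x ^ 2) • (2 * a x) • a' = (4 * a x ^ 3) • a' := by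
    rw [smul_smul]; congr 1; ring
  rw [e1, e2] at h2; exact h2

lemma hfd_coord (p : E4) (i : Fin 4) : HasFDerivAt (fun q : E4 => q i) (pr4 i) p :=
  (pr4 i).hasFDerivAt

lemma hfd_comp2 {g : ℝ → ℝ} (hg : ContDiff ℝ (↑(⊤:ℕ∞)) g) (p : E4) :
    HasFDerivAt (fun q : E4 => g (q 2)) (deriv g (p 2) • pr4 2) p :=
  ((hg.differentiable (by simp) (p 2)).hasDerivAt).comp_hasFDerivAt p
    (hfd_coord p 2)

lemma Tvf_fderiv_apply (f : ℝ → ℝ) (hf : ContDiff ℝ (↑(⊤:ℕ∞)) f) (p v : E4) :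
    fderiv ℝ (Tvf f) p v =
      ![(1/3) * (v 0 * deriv f (p 2) + p 0 * deriv (deriv f) (p 2) * v 2
          + (2/3) * (2 * p 1 * v 1 * deriv (deriv f) (p 2)
            + (p 1)^2 * deriv (deriv (deriv f)) (p 2) * v 2)),
        (2/3) * (v 1 * deriv f (p 2) + p 1 * deriv (deriv f) (p 2) * v 2),
        deriv f (p 2) * v 2,
        -((1/3) * (v 3 * deriv f (p 2) + p 3 * deriv (deriv f) (p 2) * v 2)
          + (1/9) * (2 * p 0 * v 0 * deriv (deriv f) (p 2)
              + (p 0)^2 * deriv (deriv (deriv f)) (p 2) * v 2)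
          + (4/27) * (v 0 * (p 1)^2 * deriv (deriv (deriv f)) (p 2)
              + 2 * p 0 * p 1 * v 1 * deriv (deriv (deriv f)) (p 2)
              + p 0 * (p 1)^2 * deriv (deriv (deriv (deriv f))) (p 2) * v 2)
          + (4/243) * (4 * (p 1)^3 * v 1 * deriv (deriv (deriv (deriv f))) (p 2)
              + (p 1)^4 * deriv (deriv (deriv (deriv (deriv f)))) (p 2) * v 2))] := by
  have hf1 : ContDiff ℝ (↑(⊤:ℕ∞)) (deriv f) := (contDiff_infty_iff_deriv.mp hf).2
  have hf2 : ContDiff ℝ (↑(⊤:ℕ∞)) (deriv (deriv f)) := (contDiff_infty_iff_deriv.mp hf1).2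
  have hf3 : ContDiff ℝ (↑(⊤:ℕ∞)) (deriv (deriv (deriv f))) :=
    (contDiff_infty_iff_deriv.mp hf2).2
  have hf4 : ContDiff ℝ (↑(⊤:ℕ∞)) (deriv (deriv (deriv (deriv f)))) :=
    (contDiff_infty_iff_deriv.mp hf3).2
  set d1 := deriv f (p 2) with hd1
  set d2 := deriv (deriv f) (p 2) with hd2
  set d3 := deriv (deriv (deriv f)) (p 2) with hd3
  set d4 := deriv (deriv (deriv (deriv f))) (p 2) with hd4
  set d5 := deriv (deriv (deriv (deriv (deriv f)))) (p 2) with hd5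
  have c0 := (((hfd_coord p 0).mul (hfd_comp2 hf1 p)).add
      (((hfd_sq (hfd_coord p 1)).const_mul ((2:ℝ)/3)).mul (hfd_comp2 hf2 p))).const_mul ((1:ℝ)/3)
  have c1 := ((hfd_coord p 1).const_mul ((2:ℝ)/3)).mul (hfd_comp2 hf1 p)
  have c2 := hfd_comp2 hf p
  have c3 := ((((((hfd_coord p 3).const_mul ((1:ℝ)/3)).mul (hfd_comp2 hf1 p)).add
      (((hfd_sq (hfd_coord p 0)).const_mul ((1:ℝ)/9)).mul (hfd_comp2 hf2 p))).add
      ((((hfd_coord p 0).const_mul ((4:ℝ)/27)).mul (hfd_sq (hfd_coord p 1))).mul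
        (hfd_comp2 hf3 p))).add
      (((hfd_pow4 (hfd_coord p 1)).const_mul ((4:ℝ)/243)).mul (hfd_comp2 hf4 p))).neg
  -- explicit derivatives
  have h0 : HasFDerivAt (fun q : E4 => Tvf f q 0)
      (((1/3) * d1) • pr4 0 + ((1/3) * p 0 * d2 + (1/3) * (2/3) * (p 1)^2 * d3) • pr4 2
        + ((1/3) * (2/3) * 2 * p 1 * d2) • pr4 1) p := by
    refine c0.congr_fderiv ?_
    ext w
    simp [pr4]
    ring
  have h1 : HasFDerivAt (fun q : E4 => Tvf f q 1)
      (((2/3) * d1) • pr4 1 + ((2/3) * p 1 * d2) • pr4 2) p := by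
    refine c1.congr_fderiv ?_
    ext w
    simp [pr4]
    ring
  have h2 : HasFDerivAt (fun q : E4 => Tvf f q 2) (d1 • pr4 2) p := by
    exact c2
  have h3 : HasFDerivAt (fun q : E4 => Tvf f q 3)
      (-(((1/3) * d1) • pr4 3
        + ((1/3) * p 3 * d2 + (1/9) * (p 0)^2 * d3 + (4/27) * p 0 * (p 1)^2 * d4
            + (4/243) * (p 1)^4 * d5) • pr4 2
        + ((1/9) * 2 * p 0 * d2 + (4/27) * (p 1)^2 * d3) • pr4 0
        + ((4/27) * 2 * p 0 * p 1 * d3 + (4/243) * 4 * (p 1)^3 * d4) • pr4 1)) p := by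
    refine c3.congr_fderiv ?_
    ext w
    simp [pr4]
    ring
  have hT : HasFDerivAt (Tvf f)
      (ContinuousLinearMap.pi
        ![((1/3) * d1) • pr4 0 + ((1/3) * p 0 * d2 + (1/3) * (2/3) * (p 1)^2 * d3) • pr4 2
            + ((1/3) * (2/3) * 2 * p 1 * d2) • pr4 1,
          ((2/3) * d1) • pr4 1 + ((2/3) * p 1 * d2) • pr4 2,
          d1 • pr4 2,
          -(((1/3) * d1) • pr4 3
            + ((1/3) * p 3 * d2 + (1/9) * (p 0)^2 * d3 + (4/27) * p 0 * (p 1)^2 * d4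
                + (4/243) * (p 1)^4 * d5) • pr4 2
            + ((1/9) * 2 * p 0 * d2 + (4/27) * (p 1)^2 * d3) • pr4 0
            + ((4/27) * 2 * p 0 * p 1 * d3 + (4/243) * 4 * (p 1)^3 * d4) • pr4 1)]) p := by
    apply hasFDerivAt_pi.2
    intro i
    fin_cases i
    · exact h0
    · exact h1
    · exact h2
    · exact h3
  rw [hT.fderiv]
  funext i
  fin_cases i <;>
    simp [pr4, ContinuousLinearMap.pi_apply] <;>
    ring

/-- The vector fields `T(f)` on `ℝ⁴`, parametrized by smooth
functions `f(t)`, satisfy `[T(f₁), T(f₂)] = T(f₁f₂′ − f₁′f₂)` and hence form a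
centerless Virasoro (Witt-type) Lie algebra under the vector-field commutator. -/
theorem virasoro_T (f₁ f₂ : ℝ → ℝ)
    (h₁ : ContDiff ℝ (⊤ : ℕ∞) f₁) (h₂ : ContDiff ℝ (⊤ : ℕ∞) f₂) :
    vbracket (Tvf f₁) (Tvf f₂) =
      Tvf (fun t => f₁ t * deriv f₂ t - deriv f₁ t * f₂ t) := by
  have H₁ : ContDiff ℝ (↑(⊤:ℕ∞)) f₁ := h₁.of_le (by simp)
  have H₂ : ContDiff ℝ (↑(⊤:ℕ∞)) f₂ := h₂.of_le (by simp)
  have dstep : ∀ {u : ℝ → ℝ}, ContDiff ℝ (↑(⊤:ℕ∞)) u → ContDiff ℝ (↑(⊤:ℕ∞)) (deriv u) :=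
    fun h => (contDiff_infty_iff_deriv.mp h).2
  have dd : ∀ {u : ℝ → ℝ}, ContDiff ℝ (↑(⊤:ℕ∞)) u → ∀ t : ℝ, DifferentiableAt ℝ u t :=
    fun h t => h.differentiable (by simp) t
  have A1 := dstep H₁; have A2 := dstep A1; have A3 := dstep A2; have A4 := dstep A3
  have B1 := dstep H₂; have B2 := dstep B1; have B3 := dstep B2; have B4 := dstep B3
  set g : ℝ → ℝ := fun t => f₁ t * deriv f₂ t - deriv f₁ t * f₂ t with hgdef
  have hg1 : deriv g = fun t => f₁ t * deriv (deriv f₂) t - deriv (deriv f₁) t * f₂ t := by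
    funext t
    exact (((dd H₁ t).hasDerivAt.mul (dd B1 t).hasDerivAt).sub
      ((dd A1 t).hasDerivAt.mul (dd H₂ t).hasDerivAt)).deriv.trans (by ring)
  have hg2 : deriv (deriv g) = fun t =>
      f₁ t * deriv (deriv (deriv f₂)) t + deriv f₁ t * deriv (deriv f₂) t
        - deriv (deriv f₁) t * deriv f₂ t - deriv (deriv (deriv f₁)) t * f₂ t := by
    rw [hg1]; funext t
    exact (((dd H₁ t).hasDerivAt.mul (dd B2 t).hasDerivAt).sub
      ((dd A2 t).hasDerivAt.mul (dd H₂ t).hasDerivAt)).deriv.trans (by ring)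
  have hg3 : deriv (deriv (deriv g)) = fun t =>
      f₁ t * deriv (deriv (deriv (deriv f₂))) t
        + 2 * deriv f₁ t * deriv (deriv (deriv f₂)) t
        - 2 * deriv (deriv (deriv f₁)) t * deriv f₂ t
        - deriv (deriv (deriv (deriv f₁))) t * f₂ t := by
    rw [hg2]; funext t
    exact (((((dd H₁ t).hasDerivAt.mul (dd B3 t).hasDerivAt).add
      ((dd A1 t).hasDerivAt.mul (dd B2 t).hasDerivAt)).sub
      ((dd A2 t).hasDerivAt.mul (dd B1 t).hasDerivAt)).sub
      ((dd A3 t).hasDerivAt.mul (dd H₂ t).hasDerivAt)).deriv.trans (by ring)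
  have hg4 : deriv (deriv (deriv (deriv g))) = fun t =>
      f₁ t * deriv (deriv (deriv (deriv (deriv f₂)))) t
        + 3 * deriv f₁ t * deriv (deriv (deriv (deriv f₂))) t
        + 2 * deriv (deriv f₁) t * deriv (deriv (deriv f₂)) t
        - 2 * deriv (deriv (deriv f₁)) t * deriv (deriv f₂) t
        - 3 * deriv (deriv (deriv (deriv f₁))) t * deriv f₂ t
        - deriv (deriv (deriv (deriv (deriv f₁)))) t * f₂ t := by
    rw [hg3]; funext t
    exact (((((dd H₁ t).hasDerivAt.mul (dd B4 t).hasDerivAt).add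
      ((HasDerivAt.const_mul (2:ℝ) (dd A1 t).hasDerivAt).mul (dd B3 t).hasDerivAt)).sub
      ((HasDerivAt.const_mul (2:ℝ) (dd A3 t).hasDerivAt).mul (dd B1 t).hasDerivAt)).sub
      ((dd A4 t).hasDerivAt.mul (dd H₂ t).hasDerivAt)).deriv.trans (by ring)
  funext p
  show fderiv ℝ (Tvf f₂) p (Tvf f₁ p) - fderiv ℝ (Tvf f₁) p (Tvf f₂ p) = Tvf g p
  rw [Tvf_fderiv_apply f₂ H₂ p (Tvf f₁ p), Tvf_fderiv_apply f₁ H₁ p (Tvf f₂ p)]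
  rw [show Tvf g p = ![(1/3) * (p 0 * deriv g (p 2) + (2/3) * (p 1)^2 * deriv (deriv g) (p 2)),
      (2/3) * p 1 * deriv g (p 2), g (p 2),
      -((1/3) * p 3 * deriv g (p 2) + (1/9) * (p 0)^2 * deriv (deriv g) (p 2)
        + (4/27) * p 0 * (p 1)^2 * deriv (deriv (deriv g)) (p 2)
        + (4/243) * (p 1)^4 * deriv (deriv (deriv (deriv g))) (p 2))] from rfl]
  rw [hg4, hg3, hg2, hg1]
  funext i
  fin_cases i <;>
    · simp only [Pi.sub_apply]
      simp [Tvf, hgdef]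
      ring
end

section
/- In the Lie algebra of Section III, the mixed brackets between the Virasoro part and the Kac-Moody part are [T(f), Y(g)] = Y(f g′ − (2/3) g f′), [T(f), X(h)] = X(f h′ − (1/3) h f′), [T(f), W(k)] = W(f k′ + f′ k), and [T(f), U(ℓ)] = U(f ℓ′ + (1/3) ℓ f′). -/
section AuxLemmas

private lemma fmk0 (h : 0 < 4) : (⟨0, h⟩ : Fin 4) = 0 := rfl
private lemma fmk1 (h : 1 < 4) : (⟨1, h⟩ : Fin 4) = 1 := rfl
private lemma fmk2 (h : 2 < 4) : (⟨2, h⟩ : Fin 4) = 2 := rfl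
private lemma fmk3 (h : 3 < 4) : (⟨3, h⟩ : Fin 4) = 3 := rfl

private lemma smD {f : ℝ → ℝ} (hf : ContDiff ℝ (⊤:ℕ∞) f) : ContDiff ℝ (⊤:ℕ∞) (deriv f) :=
  (contDiff_infty_iff_deriv.mp hf).2

private lemma smDf {f : ℝ → ℝ} (hf : ContDiff ℝ (⊤:ℕ∞) f) : Differentiable ℝ f :=
  hf.differentiable (by simp)

private lemma hasF_proj (i : Fin 4) (p : E4) :
    HasFDerivAt (fun q : E4 => q i) (ContinuousLinearMap.proj i : E4 →L[ℝ] ℝ) p := by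
  exact ((ContinuousLinearMap.proj i : E4 →L[ℝ] ℝ)).hasFDerivAt (x := p)

private lemma hasF_cm {f : ℝ → ℝ} (hf : Differentiable ℝ f) (p : E4) :
    HasFDerivAt (fun q : E4 => f (q 2))
      (deriv f (p 2) • (ContinuousLinearMap.proj 2 : E4 →L[ℝ] ℝ)) p := by
  exact
    HasDerivAt.comp_hasFDerivAt p ((hf (p 2)).hasDerivAt) (hasF_proj 2 p)

private lemma hasF_pow (n : ℕ) (i : Fin 4) (p : E4) :
    HasFDerivAt (fun q : E4 => (q i) ^ n)
      (((n : ℝ) * (p i) ^ (n-1)) • (ContinuousLinearMap.proj i : E4 →L[ℝ] ℝ)) p := by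
  exact
    HasDerivAt.comp_hasFDerivAt p (hasDerivAt_pow n (p i)) (hasF_proj i p)

private lemma fderiv_pi_apply {F : E4 → E4} {p : E4} (hF : DifferentiableAt ℝ F p)
    (u : E4) (i : Fin 4) :
    fderiv ℝ F p u i = fderiv ℝ (fun q => F q i) p u := by
  have h : (fun q => F q i) = (⇑(ContinuousLinearMap.proj i : E4 →L[ℝ] ℝ)) ∘ F := rfl
  rw [h, fderiv_comp p (ContinuousLinearMap.proj i).differentiableAt hF,
    ContinuousLinearMap.fderiv]
  rfl

private lemma fderiv_Uvf_apply (l : ℝ → ℝ) (hl : ContDiff ℝ (⊤:ℕ∞) l) (p u : E4) :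
    fderiv ℝ (Uvf l) p u = ![0, 0, 0, deriv l (p 2) * u 2] := by
  have h3 := hasF_cm (smDf hl) p
  have h2 : HasFDerivAt (fun _ : E4 => (0:ℝ)) (0 : E4 →L[ℝ] ℝ) p := hasFDerivAt_const 0 p
  have hd : DifferentiableAt ℝ (Uvf l) p := by
    rw [differentiableAt_pi]; intro i; fin_cases i
    · simpa [Uvf] using h2.differentiableAt
    · simpa [Uvf] using h2.differentiableAt
    · simpa [Uvf] using h2.differentiableAt
    · simpa [Uvf] using h3.differentiableAt
  funext i
  rw [fderiv_pi_apply hd]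
  fin_cases i
  · simp [Uvf]
  · simp [Uvf]
  · simp [Uvf]
  · simp only [fmk3, Uvf, Matrix.cons_val_three, Matrix.tail_cons, Matrix.head_cons]
    rw [h3.fderiv]; simp

private lemma fderiv_Wvf_apply (k : ℝ → ℝ) (hk : ContDiff ℝ (⊤:ℕ∞) k) (p u : E4) :
    fderiv ℝ (Wvf k) p u = ![0, 0, 0, deriv k (p 2) * u 2 * p 1 + k (p 2) * u 1] := by
  have h3 := (hasF_cm (smDf hk) p).fun_mul (hasF_proj 1 p)
  have h2 : HasFDerivAt (fun _ : E4 => (0:ℝ)) (0 : E4 →L[ℝ] ℝ) p := hasFDerivAt_const 0 p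
  have hd : DifferentiableAt ℝ (Wvf k) p := by
    rw [differentiableAt_pi]; intro i; fin_cases i
    · simpa [Wvf] using h2.differentiableAt
    · simpa [Wvf] using h2.differentiableAt
    · simpa [Wvf] using h2.differentiableAt
    · simpa [Wvf] using h3.differentiableAt
  funext i
  rw [fderiv_pi_apply hd]
  fin_cases i
  · simp [Wvf]
  · simp [Wvf]
  · simp [Wvf]
  · simp only [fmk3, Wvf, Matrix.cons_val_three, Matrix.tail_cons, Matrix.head_cons]
    rw [h3.fderiv]
    simp only [ContinuousLinearMap.add_apply, ContinuousLinearMap.smul_apply,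
      ContinuousLinearMap.proj_apply, smul_eq_mul]
    ring

private lemma fderiv_Xvf_apply (h : ℝ → ℝ) (hh : ContDiff ℝ (⊤:ℕ∞) h) (p u : E4) :
    fderiv ℝ (Xvf h) p u =
      ![deriv h (p 2) * u 2, 0, 0,
        -(2/3) * (u 0 * deriv h (p 2) + p 0 * deriv (deriv h) (p 2) * u 2
          + 4/3 * p 1 * u 1 * deriv (deriv h) (p 2)
          + 2/3 * (p 1)^2 * deriv (deriv (deriv h)) (p 2) * u 2)] := by
  have hh1 := smD hh; have hh2 := smD hh1
  have h0 := hasF_cm (smDf hh) p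
  have h2 : HasFDerivAt (fun _ : E4 => (0:ℝ)) (0 : E4 →L[ℝ] ℝ) p := hasFDerivAt_const 0 p
  have h3 := (((hasF_proj 0 p).fun_mul (hasF_cm (smDf hh1) p)).fun_add
      (((hasF_pow 2 1 p).const_mul (2/3:ℝ)).fun_mul (hasF_cm (smDf hh2) p))).const_mul (-(2/3):ℝ)
  have hd : DifferentiableAt ℝ (Xvf h) p := by
    rw [differentiableAt_pi]; intro i; fin_cases i
    · simpa [Xvf] using h0.differentiableAt
    · simpa [Xvf] using h2.differentiableAt
    · simpa [Xvf] using h2.differentiableAt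
    · simpa [Xvf] using h3.differentiableAt
  funext i
  rw [fderiv_pi_apply hd]
  fin_cases i
  · simp only [fmk0, Xvf, Matrix.cons_val_zero]
    rw [h0.fderiv]
    simp only [ContinuousLinearMap.smul_apply, ContinuousLinearMap.proj_apply, smul_eq_mul]
  · simp [Xvf]
  · simp [Xvf]
  · simp only [fmk3, Xvf, Matrix.cons_val_three, Matrix.tail_cons, Matrix.head_cons]
    rw [show (fun q : E4 => -(2/3) * (q 0 * deriv h (q 2) + 2/3 * (q 1)^2 * deriv (deriv h) (q 2)))
        = fun q : E4 => -(2/3:ℝ) * (q 0 * deriv h (q 2) + 2/3 * (q 1)^2 * deriv (deriv h) (q 2))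
      from rfl, h3.fderiv]
    simp only [ContinuousLinearMap.add_apply, ContinuousLinearMap.smul_apply,
      ContinuousLinearMap.proj_apply, smul_eq_mul]
    push_cast
    ring

private lemma fderiv_Yvf_apply (g : ℝ → ℝ) (hg : ContDiff ℝ (⊤:ℕ∞) g) (p u : E4) :
    fderiv ℝ (Yvf g) p u =
      ![2/3 * u 1 * deriv g (p 2) + 2/3 * p 1 * deriv (deriv g) (p 2) * u 2,
        deriv g (p 2) * u 2,
        0,
        -(4/9) * u 1 * (p 0 * deriv (deriv g) (p 2) + 2/9 * (p 1)^2 * deriv (deriv (deriv g)) (p 2))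
          - 4/9 * p 1 * (u 0 * deriv (deriv g) (p 2) + p 0 * deriv (deriv (deriv g)) (p 2) * u 2
            + 4/9 * p 1 * u 1 * deriv (deriv (deriv g)) (p 2)
            + 2/9 * (p 1)^2 * deriv (deriv (deriv (deriv g))) (p 2) * u 2)] := by
  have hg1 := smD hg; have hg2 := smD hg1; have hg3 := smD hg2
  have h0 := ((hasF_proj 1 p).const_mul (2/3:ℝ)).fun_mul (hasF_cm (smDf hg1) p)
  have h1 := hasF_cm (smDf hg) p
  have h2 : HasFDerivAt (fun _ : E4 => (0:ℝ)) (0 : E4 →L[ℝ] ℝ) p := hasFDerivAt_const 0 p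
  have h3 := ((hasF_proj 1 p).const_mul (-(4/9):ℝ)).fun_mul
      (((hasF_proj 0 p).fun_mul (hasF_cm (smDf hg2) p)).fun_add
        (((hasF_pow 2 1 p).const_mul (2/9:ℝ)).fun_mul (hasF_cm (smDf hg3) p)))
  have hd : DifferentiableAt ℝ (Yvf g) p := by
    rw [differentiableAt_pi]; intro i; fin_cases i
    · simpa [Yvf] using h0.differentiableAt
    · simpa [Yvf] using h1.differentiableAt
    · simpa [Yvf] using h2.differentiableAt
    · simpa [Yvf] using h3.differentiableAt
  funext i
  rw [fderiv_pi_apply hd]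
  fin_cases i
  · simp only [fmk0, Yvf, Matrix.cons_val_zero]
    rw [h0.fderiv]
    simp only [ContinuousLinearMap.add_apply, ContinuousLinearMap.smul_apply,
      ContinuousLinearMap.proj_apply, smul_eq_mul]
    ring
  · simp only [fmk1, Yvf, Matrix.cons_val_one, Matrix.head_cons, Matrix.cons_val_zero]
    rw [h1.fderiv]
    simp only [ContinuousLinearMap.smul_apply, ContinuousLinearMap.proj_apply, smul_eq_mul]
  · simp [Yvf]
  · simp only [fmk3, Yvf, Matrix.cons_val_three, Matrix.tail_cons, Matrix.head_cons]
    rw [h3.fderiv]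
    simp only [ContinuousLinearMap.add_apply, ContinuousLinearMap.smul_apply,
      ContinuousLinearMap.proj_apply, smul_eq_mul]
    push_cast
    ring

set_option maxHeartbeats 2000000 in
private lemma fderiv_Tvf_apply (f : ℝ → ℝ) (hf : ContDiff ℝ (⊤:ℕ∞) f) (p u : E4) :
    fderiv ℝ (Tvf f) p u =
      ![1/3 * u 0 * deriv f (p 2) + 1/3 * p 0 * deriv (deriv f) (p 2) * u 2
          + 4/9 * p 1 * u 1 * deriv (deriv f) (p 2)
          + 2/9 * (p 1)^2 * deriv (deriv (deriv f)) (p 2) * u 2,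
        2/3 * u 1 * deriv f (p 2) + 2/3 * p 1 * deriv (deriv f) (p 2) * u 2,
        deriv f (p 2) * u 2,
        -(1/3 * u 3 * deriv f (p 2) + 1/3 * p 3 * deriv (deriv f) (p 2) * u 2
          + 2/9 * p 0 * u 0 * deriv (deriv f) (p 2)
          + 1/9 * (p 0)^2 * deriv (deriv (deriv f)) (p 2) * u 2
          + 4/27 * u 0 * (p 1)^2 * deriv (deriv (deriv f)) (p 2)
          + 8/27 * p 0 * p 1 * u 1 * deriv (deriv (deriv f)) (p 2)
          + 4/27 * p 0 * (p 1)^2 * deriv (deriv (deriv (deriv f))) (p 2) * u 2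
          + 16/243 * (p 1)^3 * u 1 * deriv (deriv (deriv (deriv f))) (p 2)
          + 4/243 * (p 1)^4 * deriv (deriv (deriv (deriv (deriv f)))) (p 2) * u 2)] := by
  have hf1 := smD hf; have hf2 := smD hf1; have hf3 := smD hf2; have hf4 := smD hf3
  have h0 := (((hasF_proj 0 p).fun_mul (hasF_cm (smDf hf1) p)).fun_add
      (((hasF_pow 2 1 p).const_mul (2/3:ℝ)).fun_mul (hasF_cm (smDf hf2) p))).const_mul (1/3:ℝ)
  have h1 := ((hasF_proj 1 p).const_mul (2/3:ℝ)).fun_mul (hasF_cm (smDf hf1) p)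
  have h2 := hasF_cm (smDf hf) p
  have h3 := (((((hasF_proj 3 p).const_mul (1/3:ℝ)).fun_mul (hasF_cm (smDf hf1) p)).fun_add
        (((hasF_pow 2 0 p).const_mul (1/9:ℝ)).fun_mul (hasF_cm (smDf hf2) p))).fun_add
        ((((hasF_proj 0 p).const_mul (4/27:ℝ)).fun_mul (hasF_pow 2 1 p)).fun_mul
          (hasF_cm (smDf hf3) p))).fun_add
        (((hasF_pow 4 1 p).const_mul (4/243:ℝ)).fun_mul (hasF_cm (smDf hf4) p)) |>.fun_neg
  have hd : DifferentiableAt ℝ (Tvf f) p := by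
    rw [differentiableAt_pi]; intro i; fin_cases i
    · simpa [Tvf] using h0.differentiableAt
    · simpa [Tvf] using h1.differentiableAt
    · simpa [Tvf] using h2.differentiableAt
    · simpa [Tvf] using h3.differentiableAt
  funext i
  rw [fderiv_pi_apply hd]
  fin_cases i
  · simp only [fmk0, Tvf, Matrix.cons_val_zero]
    rw [h0.fderiv]
    simp only [ContinuousLinearMap.add_apply, ContinuousLinearMap.smul_apply,
      ContinuousLinearMap.proj_apply, smul_eq_mul]
    push_cast
    ring
  · simp only [fmk1, Tvf, Matrix.cons_val_one, Matrix.head_cons, Matrix.cons_val_zero]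
    rw [h1.fderiv]
    simp only [ContinuousLinearMap.add_apply, ContinuousLinearMap.smul_apply,
      ContinuousLinearMap.proj_apply, smul_eq_mul]
    ring
  · simp only [fmk2, Tvf, Matrix.cons_val_two, Matrix.tail_cons, Matrix.head_cons]
    rw [h2.fderiv]
    simp only [ContinuousLinearMap.smul_apply, ContinuousLinearMap.proj_apply, smul_eq_mul]
  · simp only [fmk3, Tvf, Matrix.cons_val_three, Matrix.tail_cons, Matrix.head_cons]
    rw [h3.fderiv]
    simp only [ContinuousLinearMap.neg_apply, ContinuousLinearMap.add_apply,
      ContinuousLinearMap.smul_apply, ContinuousLinearMap.proj_apply, smul_eq_mul]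
    push_cast
    ring

end AuxLemmas

set_option maxHeartbeats 2000000 in
/-- Mixed brackets between the Virasoro part `T(f)` and the
Kac-Moody part `{Y, X, W, U}` of the symmetry algebra of the potential KP
equation: `[T(f), Y(g)] = Y(fg′ − (2/3)gf′)`, `[T(f), X(h)] = X(fh′ − (1/3)hf′)`,
`[T(f), W(k)] = W(fk′ + f′k)`, `[T(f), U(ℓ)] = U(fℓ′ + (1/3)ℓf′)`. -/
theorem virasoro_kac_moody_mixed (f g h k l : ℝ → ℝ)
    (hf : ContDiff ℝ (⊤ : ℕ∞) f) (hg : ContDiff ℝ (⊤ : ℕ∞) g) (hh : ContDiff ℝ (⊤ : ℕ∞) h)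
    (hk : ContDiff ℝ (⊤ : ℕ∞) k) (hl : ContDiff ℝ (⊤ : ℕ∞) l) :
    vbracket (Tvf f) (Yvf g) =
      Yvf (fun t => f t * deriv g t - (2/3) * g t * deriv f t) ∧
    vbracket (Tvf f) (Xvf h) =
      Xvf (fun t => f t * deriv h t - (1/3) * h t * deriv f t) ∧
    vbracket (Tvf f) (Wvf k) =
      Wvf (fun t => f t * deriv k t + deriv f t * k t) ∧
    vbracket (Tvf f) (Uvf l) =
      Uvf (fun t => f t * deriv l t + (1/3) * l t * deriv f t) := by
  have hf' : ContDiff ℝ (⊤:ℕ∞) f := hf.of_le (by simp)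
  have hg' : ContDiff ℝ (⊤:ℕ∞) g := hg.of_le (by simp)
  have hh' : ContDiff ℝ (⊤:ℕ∞) h := hh.of_le (by simp)
  have hk' : ContDiff ℝ (⊤:ℕ∞) k := hk.of_le (by simp)
  have hl' : ContDiff ℝ (⊤:ℕ∞) l := hl.of_le (by simp)
  have Df : Differentiable ℝ f := smDf hf'
  have Df1 : Differentiable ℝ (deriv f) := smDf (smD hf')
  have Df2 : Differentiable ℝ (deriv (deriv f)) := smDf (smD (smD hf'))
  have Df3 : Differentiable ℝ (deriv (deriv (deriv f))) := smDf (smD (smD (smD hf')))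
  have Dg : Differentiable ℝ g := smDf hg'
  have Dg1 : Differentiable ℝ (deriv g) := smDf (smD hg')
  have Dg2 : Differentiable ℝ (deriv (deriv g)) := smDf (smD (smD hg'))
  have Dg3 : Differentiable ℝ (deriv (deriv (deriv g))) := smDf (smD (smD (smD hg')))
  have Dh : Differentiable ℝ h := smDf hh'
  have Dh1 : Differentiable ℝ (deriv h) := smDf (smD hh')
  have Dh2 : Differentiable ℝ (deriv (deriv h)) := smDf (smD (smD hh'))
  refine ⟨?_, ?_, ?_, ?_⟩
  · -- [T(f), Y(g)] = Y(fg' - (2/3) g f')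
    have d1 : deriv (fun t => f t * deriv g t - 2/3 * g t * deriv f t) =
        fun t => f t * deriv (deriv g) t + 1/3 * deriv f t * deriv g t
          - 2/3 * g t * deriv (deriv f) t := by
      funext t
      simp (disch := fun_prop) only [deriv_fun_sub, deriv_fun_add, deriv_fun_mul, deriv_const_mul,
        deriv_const']
      ring
    have d2 : deriv (fun t => f t * deriv (deriv g) t + 1/3 * deriv f t * deriv g t
          - 2/3 * g t * deriv (deriv f) t) =
        fun t => f t * deriv (deriv (deriv g)) t + 4/3 * deriv f t * deriv (deriv g) t
          - 1/3 * deriv (deriv f) t * deriv g t - 2/3 * g t * deriv (deriv (deriv f)) t := by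
      funext t
      simp (disch := fun_prop) only [deriv_fun_sub, deriv_fun_add, deriv_fun_mul, deriv_const_mul,
        deriv_const']
      ring
    have d3 : deriv (fun t => f t * deriv (deriv (deriv g)) t
          + 4/3 * deriv f t * deriv (deriv g) t
          - 1/3 * deriv (deriv f) t * deriv g t - 2/3 * g t * deriv (deriv (deriv f)) t) =
        fun t => f t * deriv (deriv (deriv (deriv g))) t
          + 7/3 * deriv f t * deriv (deriv (deriv g)) t
          + deriv (deriv f) t * deriv (deriv g) t
          - deriv (deriv (deriv f)) t * deriv g t
          - 2/3 * g t * deriv (deriv (deriv (deriv f))) t := by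
      funext t
      simp (disch := fun_prop) only [deriv_fun_sub, deriv_fun_add, deriv_fun_mul, deriv_const_mul,
        deriv_const']
      ring
    funext p
    simp only [vbracket]
    rw [fderiv_Yvf_apply g hg' p (Tvf f p), fderiv_Tvf_apply f hf' p (Yvf g p)]
    funext i; fin_cases i <;>
      simp only [fmk0, fmk1, fmk2, fmk3, Pi.sub_apply, Tvf, Yvf, d1, d2, d3,
        Matrix.cons_val_zero, Matrix.cons_val_one, Matrix.head_cons,
        Matrix.cons_val_two, Matrix.tail_cons, Matrix.cons_val_three] <;>
      ring
  · -- [T(f), X(h)] = X(fh' - (1/3) h f')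
    have e1 : deriv (fun t => f t * deriv h t - 1/3 * h t * deriv f t) =
        fun t => f t * deriv (deriv h) t + 2/3 * deriv f t * deriv h t
          - 1/3 * h t * deriv (deriv f) t := by
      funext t
      simp (disch := fun_prop) only [deriv_fun_sub, deriv_fun_add, deriv_fun_mul, deriv_const_mul,
        deriv_const']
      ring
    have e2 : deriv (fun t => f t * deriv (deriv h) t + 2/3 * deriv f t * deriv h t
          - 1/3 * h t * deriv (deriv f) t) =
        fun t => f t * deriv (deriv (deriv h)) t + 5/3 * deriv f t * deriv (deriv h) t
          + 1/3 * deriv (deriv f) t * deriv h t - 1/3 * h t * deriv (deriv (deriv f)) t := by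
      funext t
      simp (disch := fun_prop) only [deriv_fun_sub, deriv_fun_add, deriv_fun_mul, deriv_const_mul,
        deriv_const']
      ring
    funext p
    simp only [vbracket]
    rw [fderiv_Xvf_apply h hh' p (Tvf f p), fderiv_Tvf_apply f hf' p (Xvf h p)]
    funext i; fin_cases i <;>
      simp only [fmk0, fmk1, fmk2, fmk3, Pi.sub_apply, Tvf, Xvf, e1, e2,
        Matrix.cons_val_zero, Matrix.cons_val_one, Matrix.head_cons,
        Matrix.cons_val_two, Matrix.tail_cons, Matrix.cons_val_three] <;>
      ring
  · -- [T(f), W(k)] = W(fk' + f'k)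
    funext p
    simp only [vbracket]
    rw [fderiv_Wvf_apply k hk' p (Tvf f p), fderiv_Tvf_apply f hf' p (Wvf k p)]
    funext i; fin_cases i <;>
      simp only [fmk0, fmk1, fmk2, fmk3, Pi.sub_apply, Tvf, Wvf,
        Matrix.cons_val_zero, Matrix.cons_val_one, Matrix.head_cons,
        Matrix.cons_val_two, Matrix.tail_cons, Matrix.cons_val_three] <;>
      ring
  · -- [T(f), U(l)] = U(fl' + (1/3) l f')
    funext p
    simp only [vbracket]
    rw [fderiv_Uvf_apply l hl' p (Tvf f p), fderiv_Tvf_apply f hf' p (Uvf l p)]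
    funext i; fin_cases i <;>
      simp only [fmk0, fmk1, fmk2, fmk3, Pi.sub_apply, Tvf, Uvf,
        Matrix.cons_val_zero, Matrix.cons_val_one, Matrix.head_cons,
        Matrix.cons_val_two, Matrix.tail_cons, Matrix.cons_val_three] <;>
      ring
end
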